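/- Fix n ≥ 1, M ≥ 1, and an n×n symmetric positive semidefinite matrix Q with Q_{jj} = 1 for all j and |Q_{jj'}| ≤ 1 for all j, j′. For every ε > 0 there exist δ ∈ (0, ε) and N₀ such that for all N ≥ N₀ the following holds: if σ ∈ Q_N^ε and ω ∈ Ω_M^{ε/2,δ}, then the transformed concatenated configuration ρ̃ = (σ̃, ω̃) ∈ (ℝ^{N+M})^n, defined coordinatewise by σ̃(j) = a_{M+1}(ω(j))·σ(j) and ω̃_i(j) = a_i(ω(j))·ω_i(j) for i ≤ M, satisfies ‖ R(ρ̃, ρ̃) − Q ‖_∞ ≤ ε, where the overlap R(ρ̃,ρ̃) is normalized by N+M. -/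

import Mathlib

/-!
Each coefficient `a_ℓ(x)²` is a product of at most `M` factors `1 + O(M/N)`, so all the
`a_ℓ(ω(j))` tend to `1` uniformly on `Ω_M`. This crude estimate handles the `ω`-block, whose
weight in the overlap is `M/(N+M)`, but not the `σ`-block, whose weight is `N/(N+M)`: there we
need the first-order expansion `a_{M+1}(x)² = 1 + (M - ‖x‖²)/N + O(1/N²)`. On `Ω_M` one has
`|M - ‖x‖²| ≤ δM`, so both blocks together deviate from `(N+M) Q` by at most
`Nε + M(ε/2 + O(δ)) + O(1/N)`, which is `≤ (N+M) ε` once `δ ≪ ε` and `N` is large.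
-/

open Matrix Real

/-- The entrywise supremum norm `‖M‖_∞ = max_{i,j} |M_{ij}|` of a matrix. -/
noncomputable def supNorm {n : ℕ} (M : Matrix (Fin n) (Fin n) ℝ) : ℝ :=
  ⨆ i, ⨆ j, |M i j|

/-- The `n × n` overlap matrix of two configurations in `(ℝ^K)^n`:
`R(ρ,ρ')_{jj'} = (1/K) ⟨ρ(j), ρ'(j')⟩`. -/
noncomputable def overlap {n K : ℕ} (ρ ρ' : Fin n → Fin K → ℝ) :
    Matrix (Fin n) (Fin n) ℝ :=
  Matrix.of fun j j' => (1 / (K : ℝ)) * ∑ i, ρ j i * ρ' j' i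

/-- The Poincaré-limit coefficients `a_ℓ(x) = ∏_{j=1}^{ℓ-1} √(1 + (1 - x_j²)/(M+N-j))`
for `x ∈ ℝ^M` (so `a₁ = 1`). -/
noncomputable def coeff (M N : ℕ) (x : Fin M → ℝ) (ℓ : ℕ) : ℝ :=
  ∏ j ∈ Finset.univ.filter (fun j : Fin M => (j : ℕ) + 1 < ℓ),
    Real.sqrt (1 + (1 - x j ^ 2) / ((M : ℝ) + N - ((j : ℕ) + 1)))

open Finset Filter

theorem Finset.abs_prod_one_add_sub_one_sub_sum_le {ι : Type*} (s : Finset ι) (u : ι → ℝ) :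
    |∏ i ∈ s, (1 + u i) - 1 - ∑ i ∈ s, u i| ≤
      (∑ i ∈ s, |u i|) * (Real.exp (∑ i ∈ s, |u i|) - 1) := by
  induction s using Finset.cons_induction with
  | empty => simp
  | cons a s ha ih =>
    have hfirst := s.norm_prod_one_add_sub_one_le u
    simp only [Real.norm_eq_abs] at hfirst
    rw [prod_cons, sum_cons, sum_cons,
      show (1 + u a) * ∏ i ∈ s, (1 + u i) - 1 - (u a + ∑ i ∈ s, u i) =
        (∏ i ∈ s, (1 + u i) - 1 - ∑ i ∈ s, u i) + u a * (∏ i ∈ s, (1 + u i) - 1) by ring]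
    calc _ ≤ (∑ i ∈ s, |u i|) * (Real.exp (∑ i ∈ s, |u i|) - 1)
          + |u a| * (Real.exp (∑ i ∈ s, |u i|) - 1) := by
          grw [abs_add_le, abs_mul, ih, hfirst]
      _ ≤ _ := by
          rw [← add_mul, add_comm]
          gcongr
          exact le_add_of_nonneg_left (abs_nonneg _)

theorem Real.exp_sub_one_le_two_mul {t : ℝ} (h₀ : 0 ≤ t) (h₁ : t ≤ 1) :
    Real.exp t - 1 ≤ 2 * t := by
  have h := Real.abs_exp_sub_one_le (x := t) (by rwa [abs_of_nonneg h₀])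
  rw [abs_of_nonneg h₀] at h
  exact (le_abs_self _).trans h

theorem abs_mul_sub_one_le_of_sq {a b : ℝ} (ha : 0 ≤ a) (hb : 0 ≤ b) :
    |a * b - 1| ≤ |a ^ 2 - 1| + |b ^ 2 - 1| + |a ^ 2 - 1| * |b ^ 2 - 1| := by
  have hab : |a * b - 1| ≤ |(a * b) ^ 2 - 1| := by
    rw [show (a * b) ^ 2 - 1 = (a * b - 1) * (a * b + 1) by ring, abs_mul]
    exact le_mul_of_one_le_right (abs_nonneg _)
      (by rw [abs_of_nonneg (by positivity)]; linarith [mul_nonneg ha hb])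
  rw [show (a * b) ^ 2 - 1 = (a ^ 2 - 1) + (b ^ 2 - 1) + (a ^ 2 - 1) * (b ^ 2 - 1) by ring] at hab
  grw [hab, abs_add_le, abs_add_le, abs_mul]

theorem abs_mul_sub_le_of_abs_le_one {t r q η : ℝ} (hq : |q| ≤ 1) (hr : |r - q| ≤ η) :
    |t * r - q| ≤ |t - 1| * (1 + η) + η := by
  have hr1 : |r| ≤ 1 + η := by
    calc |r| = |(r - q) + q| := by ring_nf
      _ ≤ 1 + η := by grw [abs_add_le, hr, hq]; linarith
  calc |t * r - q| = |(t - 1) * r + (r - q)| := by ring_nf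
    _ ≤ _ := by grw [abs_add_le, abs_mul, hr1, hr]

theorem abs_mul_sub_one_le_of_mem_sqrt {s s' δ : ℝ} (hδ₀ : 0 ≤ δ) (hδ₁ : δ ≤ 1)
    (hs : √(1 - δ) ≤ s ∧ s ≤ √(1 + δ)) (hs' : √(1 - δ) ≤ s' ∧ s' ≤ √(1 + δ)) :
    |s * s' - 1| ≤ δ := by
  have hlow : 1 - δ ≤ s * s' := by
    rw [← Real.mul_self_sqrt (by linarith : 0 ≤ 1 - δ)]
    exact mul_le_mul hs.1 hs'.1 (Real.sqrt_nonneg _) ((Real.sqrt_nonneg _).trans hs.1)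
  have hup : s * s' ≤ 1 + δ := by
    rw [← Real.mul_self_sqrt (by linarith : 0 ≤ 1 + δ)]
    exact mul_le_mul hs.2 hs'.2 ((Real.sqrt_nonneg _).trans hs'.1) (Real.sqrt_nonneg _)
  rw [abs_le]; constructor <;> linarith

theorem abs_le_supNorm {n : ℕ} (A : Matrix (Fin n) (Fin n) ℝ) (i j : Fin n) :
    |A i j| ≤ supNorm A :=
  (Finite.le_ciSup (fun j => |A i j|) j).trans (Finite.le_ciSup (fun i => ⨆ j, |A i j|) i)

theorem supNorm_le {n : ℕ} {A : Matrix (Fin n) (Fin n) ℝ} {ε : ℝ} (hε : 0 ≤ ε)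
    (h : ∀ i j, |A i j| ≤ ε) : supNorm A ≤ ε :=
  Real.iSup_le (fun i => Real.iSup_le (h i) hε) hε

theorem sum_mul_eq_mul_overlap {n K : ℕ} (ρ ρ' : Fin n → Fin K → ℝ) (j j' : Fin n) :
    ∑ i, ρ j i * ρ' j' i = K * overlap ρ ρ' j j' := by
  rcases K.eq_zero_or_pos with rfl | hK
  · simp
  · simp [overlap, hK.ne']

theorem overlap_append_apply {n N M : ℕ} (ρ ρ' : Fin n → Fin N → ℝ)
    (ω ω' : Fin n → Fin M → ℝ) (j j' : Fin n) :
    overlap (fun j => Fin.append (ρ j) (ω j)) (fun j => Fin.append (ρ' j) (ω' j)) j j' =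
      (∑ i, ρ j i * ρ' j' i + ∑ i, ω j i * ω' j' i) / (N + M) := by
  simp [overlap, Fin.sum_univ_add, div_eq_inv_mul]

noncomputable def coeffIncrement (M N : ℕ) (x : Fin M → ℝ) (j : Fin M) : ℝ :=
  (1 - x j ^ 2) / ((M : ℝ) + N - ((j : ℕ) + 1))

section coeff

variable {M N : ℕ} {x x' : Fin M → ℝ}

theorem coeff_nonneg {ℓ : ℕ} : 0 ≤ coeff M N x ℓ :=
  prod_nonneg fun _ _ => Real.sqrt_nonneg _

theorem sq_le_of_sum_sq_le {C : ℝ} (hx : ∑ j, x j ^ 2 ≤ C) (j : Fin M) : x j ^ 2 ≤ C :=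
  (single_le_sum (fun i _ => sq_nonneg (x i)) (mem_univ j)).trans hx

theorem sum_sq_le_two_mul_of_abs_sub_le {δ : ℝ} (hδ : δ ≤ 1) (hx : |∑ j, x j ^ 2 - M| ≤ δ * M) :
    ∑ j, x j ^ 2 ≤ 2 * M := by
  nlinarith [le_abs_self (∑ j, x j ^ 2 - M), (Nat.cast_nonneg M : (0 : ℝ) ≤ M)]

theorem le_coeffIncrement_denom (j : Fin M) : (N : ℝ) ≤ (M : ℝ) + N - ((j : ℕ) + 1) := by
  have : ((j : ℕ) : ℝ) + 1 ≤ M := by exact_mod_cast j.isLt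
  linarith

theorem abs_coeffIncrement_le (hN : 0 < N) (hx : ∑ j, x j ^ 2 ≤ 2 * M) (j : Fin M) :
    |coeffIncrement M N x j| ≤ (2 * M + 1) / N := by
  have hxj : x j ^ 2 ≤ 2 * M := sq_le_of_sum_sq_le hx j
  have hN' : (0 : ℝ) < N := by exact_mod_cast hN
  rw [coeffIncrement, abs_div, abs_of_pos (hN'.trans_le (le_coeffIncrement_denom j))]
  refine div_le_div₀ (by positivity) ?_ hN' (le_coeffIncrement_denom j)
  rw [abs_le]; constructor <;> nlinarith [sq_nonneg (x j)]

theorem sum_abs_coeffIncrement_le (hN : 0 < N) (hx : ∑ j, x j ^ 2 ≤ 2 * M) :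
    ∑ j, |coeffIncrement M N x j| ≤ M * (2 * M + 1) / N := by
  calc ∑ j, |coeffIncrement M N x j| ≤ ∑ _j : Fin M, (2 * M + 1) / (N : ℝ) :=
        sum_le_sum fun j _ => abs_coeffIncrement_le hN hx j
    _ = M * (2 * M + 1) / N := by simp [mul_div_assoc]

theorem abs_coeffIncrement_sub_div_le (hN : 0 < N) (hx : ∑ j, x j ^ 2 ≤ 2 * M) (j : Fin M) :
    |coeffIncrement M N x j - (1 - x j ^ 2) / N| ≤ M * (2 * M + 1) / (N : ℝ) ^ 2 := by
  have hN' : (0 : ℝ) < N := by exact_mod_cast hN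
  set D : ℝ := (M : ℝ) + N - ((j : ℕ) + 1)
  have hD : (N : ℝ) ≤ D := le_coeffIncrement_denom j
  have hD0 : 0 < D := hN'.trans_le hD
  have hDM : D - N ≤ M := by simp only [D]; linarith [(Nat.cast_nonneg (j : ℕ) : (0 : ℝ) ≤ _)]
  have hxj : x j ^ 2 ≤ 2 * M := sq_le_of_sum_sq_le hx j
  have heq : coeffIncrement M N x j - (1 - x j ^ 2) / N =
      (1 - x j ^ 2) * ((N - D) / (D * N)) := by
    change (1 - x j ^ 2) / D - _ = _
    field_simp
  have hfrac : |(N - D) / (D * N)| ≤ M / (N : ℝ) ^ 2 := by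
    rw [abs_div, abs_sub_comm, abs_of_nonneg (by linarith), abs_of_pos (mul_pos hD0 hN'), sq]
    exact div_le_div₀ (Nat.cast_nonneg _) hDM (mul_pos hN' hN') (by gcongr)
  rw [heq, abs_mul, mul_comm (M : ℝ), mul_div_assoc]
  gcongr
  rw [abs_le]; constructor <;> nlinarith [sq_nonneg (x j)]

theorem abs_sum_coeffIncrement_sub_le (hN : 0 < N) (hx : ∑ j, x j ^ 2 ≤ 2 * M) :
    |∑ j, coeffIncrement M N x j - (M - ∑ j, x j ^ 2) / N| ≤
      M * (M * (2 * M + 1)) / N ^ 2 := by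
  calc _ = |∑ j, (coeffIncrement M N x j - (1 - x j ^ 2) / N)| := by
        rw [sum_sub_distrib, ← sum_div, sum_sub_distrib]; simp
    _ ≤ ∑ _j : Fin M, M * (2 * M + 1) / (N : ℝ) ^ 2 :=
        (abs_sum_le_sum_abs _ _).trans
          (sum_le_sum fun j _ => abs_coeffIncrement_sub_div_le hN hx j)
    _ = _ := by simp [mul_div_assoc]

theorem coeff_sq_eq_prod (hN : 0 < N) (hx : ∑ j, x j ^ 2 ≤ 2 * M)
    (ht : (M : ℝ) * (2 * M + 1) / N ≤ 1) (ℓ : ℕ) :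
    coeff M N x ℓ ^ 2 =
      ∏ j ∈ univ.filter (fun j : Fin M => (j : ℕ) + 1 < ℓ), (1 + coeffIncrement M N x j) := by
  rw [coeff, ← prod_pow]
  refine prod_congr rfl fun j _ => Real.sq_sqrt ?_
  have hj : |coeffIncrement M N x j| ≤ 1 :=
    ((single_le_sum (fun i _ => abs_nonneg _) (mem_univ j)).trans
      (sum_abs_coeffIncrement_le hN hx)).trans ht
  show 0 ≤ 1 + coeffIncrement M N x j
  linarith [neg_abs_le (coeffIncrement M N x j)]

theorem abs_coeff_sq_sub_one_le (hN : 0 < N) (hx : ∑ j, x j ^ 2 ≤ 2 * M)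
    (ht : (M : ℝ) * (2 * M + 1) / N ≤ 1) (ℓ : ℕ) :
    |coeff M N x ℓ ^ 2 - 1| ≤ 2 * ((M : ℝ) * (2 * M + 1) / N) := by
  set t : ℝ := M * (2 * M + 1) / N
  have ht0 : 0 ≤ t := by positivity
  rw [coeff_sq_eq_prod hN hx ht]
  calc _ ≤ Real.exp (∑ j ∈ univ.filter (fun j : Fin M => (j : ℕ) + 1 < ℓ),
        |coeffIncrement M N x j|) - 1 := by
        simpa only [Real.norm_eq_abs] using norm_prod_one_add_sub_one_le _ (coeffIncrement M N x)
    _ ≤ Real.exp t - 1 := by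
        gcongr
        exact (sum_le_sum_of_subset_of_nonneg (filter_subset _ _) fun _ _ _ => abs_nonneg _).trans
          (sum_abs_coeffIncrement_le hN hx)
    _ ≤ 2 * t := Real.exp_sub_one_le_two_mul ht0 ht

theorem abs_coeff_last_sq_sub_one_le (hN : 0 < N) (hx : ∑ j, x j ^ 2 ≤ 2 * M)
    (ht : (M : ℝ) * (2 * M + 1) / N ≤ 1) :
    N * |coeff M N x (M + 1) ^ 2 - 1| ≤
      |M - ∑ j, x j ^ 2| + M * (M * (2 * M + 1) * (4 * M + 3)) / N := by
  set t : ℝ := M * (2 * M + 1) / N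
  set u := coeffIncrement M N x
  have hN' : (0 : ℝ) < N := by exact_mod_cast hN
  have ht0 : 0 ≤ t := by positivity
  have hsum : ∑ j, |u j| ≤ t := sum_abs_coeffIncrement_le hN hx
  have hsum0 : 0 ≤ ∑ j, |u j| := sum_nonneg fun _ _ => abs_nonneg _
  have hsecond : |∏ j, (1 + u j) - 1 - ∑ j, u j| ≤ 2 * t ^ 2 := by
    calc _ ≤ (∑ j, |u j|) * (2 * ∑ j, |u j|) := by
          grw [abs_prod_one_add_sub_one_sub_sum_le,
            Real.exp_sub_one_le_two_mul hsum0 (hsum.trans ht)]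
      _ ≤ t * (2 * t) := by gcongr
      _ = 2 * t ^ 2 := by ring
  have hfilter : univ.filter (fun j : Fin M => (j : ℕ) + 1 < M + 1) = univ :=
    filter_true_of_mem fun j _ => by omega
  rw [coeff_sq_eq_prod hN hx ht, hfilter,
    show ∏ j, (1 + u j) - 1 = (∏ j, (1 + u j) - 1 - ∑ j, u j)
      + (∑ j, u j - (M - ∑ j, x j ^ 2) / N) + (M - ∑ j, x j ^ 2) / N by ring]
  grw [abs_add_le, abs_add_le, hsecond, abs_sum_coeffIncrement_sub_le hN hx, abs_div,
    abs_of_pos hN']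
  apply le_of_eq
  simp only [t]
  field_simp
  ring

theorem abs_coeff_mul_coeff_sub_one_le (hN : 0 < N) (hx : ∑ j, x j ^ 2 ≤ 2 * M)
    (hx' : ∑ j, x' j ^ 2 ≤ 2 * M) (ht : (M : ℝ) * (2 * M + 1) / N ≤ 1 / 2) (ℓ : ℕ) :
    |coeff M N x ℓ * coeff M N x' ℓ - 1| ≤ 6 * ((M : ℝ) * (2 * M + 1) / N) := by
  set t : ℝ := M * (2 * M + 1) / N
  have ht1 : t ≤ 1 := ht.trans (by norm_num)
  have ha := abs_coeff_sq_sub_one_le hN hx ht1 ℓ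
  have ha' := abs_coeff_sq_sub_one_le hN hx' ht1 ℓ
  have ha'1 : |coeff M N x' ℓ ^ 2 - 1| ≤ 1 := ha'.trans (by linarith)
  calc _ ≤ _ := abs_mul_sub_one_le_of_sq coeff_nonneg coeff_nonneg
    _ ≤ 2 * t + 2 * t + 2 * t * 1 := by gcongr
    _ = 6 * t := by ring

theorem natCast_mul_abs_coeff_last_mul_sub_one_le {δ : ℝ} (hδ : δ ≤ 1) (hN : 0 < N)
    (hx : |∑ j, x j ^ 2 - M| ≤ δ * M) (hx' : |∑ j, x' j ^ 2 - M| ≤ δ * M)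
    (ht : (M : ℝ) * (2 * M + 1) / N ≤ 1 / 2) :
    N * |coeff M N x (M + 1) * coeff M N x' (M + 1) - 1| ≤
      3 * (δ * M + M * (M * (2 * M + 1) * (4 * M + 3)) / N) := by
  have ht1 : (M : ℝ) * (2 * M + 1) / N ≤ 1 := ht.trans (by norm_num)
  set B : ℝ := δ * M + M * (M * (2 * M + 1) * (4 * M + 3)) / N
  have hlast : ∀ y : Fin M → ℝ, |∑ j, y j ^ 2 - M| ≤ δ * M →
      N * |coeff M N y (M + 1) ^ 2 - 1| ≤ B := fun y hy => by
    grw [abs_coeff_last_sq_sub_one_le hN (sum_sq_le_two_mul_of_abs_sub_le hδ hy) ht1,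
      abs_sub_comm, hy]
  have hsmall : |coeff M N x' (M + 1) ^ 2 - 1| ≤ 1 :=
    (abs_coeff_sq_sub_one_le hN (sum_sq_le_two_mul_of_abs_sub_le hδ hx') ht1 _).trans (by linarith)
  calc _ ≤ (N : ℝ) * (|coeff M N x (M + 1) ^ 2 - 1| + |coeff M N x' (M + 1) ^ 2 - 1|
        + |coeff M N x (M + 1) ^ 2 - 1| * |coeff M N x' (M + 1) ^ 2 - 1|) := by
        gcongr
        exact abs_mul_sub_one_le_of_sq coeff_nonneg coeff_nonneg
    _ ≤ B + B + B * 1 := by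
        rw [mul_add, mul_add, ← mul_assoc]
        gcongr
        · exact hlast x hx
        · exact hlast x' hx'
        · exact (mul_nonneg (Nat.cast_nonneg _) (abs_nonneg _)).trans (hlast x hx)
        · exact hlast x hx
    _ = 3 * B := by ring

end coeff

theorem abs_sum_mul_sub_le_of_eq_smul {n M : ℕ} {s : Fin n → ℝ} {τ ω : Fin n → Fin M → ℝ}
    (hω : ∀ j, ω j = s j • τ j) {j j' : Fin n} {q δ η : ℝ} (hs : |s j * s j' - 1| ≤ δ)
    (hq : |q| ≤ 1) (hτ : |overlap τ τ j j' - q| ≤ η) :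
    |∑ i, ω j i * ω j' i - M * q| ≤ M * (δ * (1 + η) + η) := by
  have hsum : ∑ i, ω j i * ω j' i = M * (s j * s j' * overlap τ τ j j' - q) + M * q := by
    simp only [hω, Pi.smul_apply, smul_eq_mul]
    rw [mul_sub, mul_left_comm, ← sum_mul_eq_mul_overlap, mul_sum]
    simp only [sub_add_cancel]
    exact sum_congr rfl fun i _ => by ring
  rw [hsum, add_sub_cancel_right, abs_mul, Nat.abs_cast]
  gcongr
  calc _ ≤ |s j * s j' - 1| * (1 + η) + η := abs_mul_sub_le_of_abs_le_one hq hτ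
    _ ≤ δ * (1 + η) + η := by
        gcongr
        linarith [(abs_nonneg _).trans hτ]

theorem abs_sum_sq_sub_le_of_eq_smul {M : ℕ} {s δ : ℝ} {τ ω : Fin M → ℝ} (hω : ω = s • τ)
    (hs : |s * s - 1| ≤ δ) (hτ : ∑ i, τ i ^ 2 = M) :
    |∑ i, ω i ^ 2 - M| ≤ δ * M := by
  have hsum : ∑ i, ω i ^ 2 - M = (s * s - 1) * M := by
    simp only [hω, Pi.smul_apply, smul_eq_mul, mul_pow, ← mul_sum, hτ]; ring
  rw [hsum, abs_mul, Nat.abs_cast]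
  gcongr

noncomputable def transformedConcat {n N M : ℕ} (σ : Fin n → Fin N → ℝ)
    (ω : Fin n → Fin M → ℝ) : Fin n → Fin (N + M) → ℝ :=
  fun j => Fin.append (fun i => coeff M N (ω j) (M + 1) * σ j i)
    (fun i => coeff M N (ω j) ((i : ℕ) + 1) * ω j i)

theorem overlap_transformedConcat_apply {n N M : ℕ} (σ : Fin n → Fin N → ℝ)
    (ω : Fin n → Fin M → ℝ) (j j' : Fin n) :
    overlap (transformedConcat σ ω) (transformedConcat σ ω) j j' =
      (N * (coeff M N (ω j) (M + 1) * coeff M N (ω j') (M + 1) * overlap σ σ j j') +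
        ∑ i : Fin M, coeff M N (ω j) ((i : ℕ) + 1) * coeff M N (ω j') ((i : ℕ) + 1) *
          (ω j i * ω j' i)) / (N + M) := by
  unfold transformedConcat
  rw [overlap_append_apply, mul_left_comm, ← sum_mul_eq_mul_overlap, mul_sum]
  congr 2 <;> exact sum_congr rfl fun i _ => by ring

theorem abs_weighted_entry_sub_le {N M : ℕ} (hN : 0 < N) {ε δ η α S Q : ℝ} {β y : Fin M → ℝ}
    (hQ : |Q| ≤ 1) (hS : |S - Q| ≤ ε)
    (hα : N * |α - 1| ≤ 3 * M * (δ + η)) (hβ : ∀ i, M * |β i - 1| ≤ η)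
    (hy : ∀ i, |y i| ≤ 2 * M) (hy_sum : |∑ i, y i - M * Q| ≤ M * (δ * (1 + ε / 2) + ε / 2))
    (hsmall : (4 + 7 * ε / 2) * δ + (5 + 3 * ε) * η ≤ ε / 2) :
    |(N * (α * S) + ∑ i, β i * y i) / (N + M) - Q| ≤ ε := by
  have hε : 0 ≤ ε := (abs_nonneg _).trans hS
  have hM : (0 : ℝ) ≤ M := Nat.cast_nonneg M
  have hN' : (0 : ℝ) < N := by exact_mod_cast hN
  have hK : (0 : ℝ) < N + M := by positivity
  have hαS : N * |α * S - Q| ≤ 3 * M * (δ + η) * (1 + ε) + N * ε := by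
    grw [abs_mul_sub_le_of_abs_le_one hQ hS, mul_add, ← mul_assoc, hα]
  have hβy : |∑ i, (β i - 1) * y i| ≤ M * (2 * η) := by
    calc _ ≤ ∑ i, |β i - 1| * |y i| := by
          simpa only [abs_mul] using abs_sum_le_sum_abs (fun i => (β i - 1) * y i) univ
      _ ≤ ∑ _i : Fin M, 2 * η := sum_le_sum fun i _ => by
          linarith [mul_le_mul_of_nonneg_left (hy i) (abs_nonneg (β i - 1)), hβ i]
      _ = M * (2 * η) := by simp
  rw [div_sub' hK.ne', abs_div, abs_of_pos hK, div_le_iff₀ hK,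
    show N * (α * S) + ∑ i, β i * y i - (N + M) * Q
      = N * (α * S - Q) + (∑ i, y i - M * Q) + ∑ i, (β i - 1) * y i by
      simp only [sub_mul, one_mul, sum_sub_distrib]; ring]
  grw [abs_add_le, abs_add_le, abs_mul, abs_of_pos hN', hαS, hy_sum, hβy]
  nlinarith [mul_le_mul_of_nonneg_left hsmall hM]

theorem eventually_abs_coeff_entry_sub_le (M : ℕ) {ε δ : ℝ} (hε : 0 < ε) (hδ₀ : 0 ≤ δ)
    (hδ₁ : δ ≤ 1) (hδε : 16 * (1 + ε) * δ ≤ ε) :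
    ∀ᶠ N : ℕ in atTop, ∀ (S Q : ℝ) (x x' : Fin M → ℝ), |Q| ≤ 1 → |S - Q| ≤ ε →
      |∑ i, x i ^ 2 - M| ≤ δ * M → |∑ i, x' i ^ 2 - M| ≤ δ * M →
      |∑ i, x i * x' i - M * Q| ≤ M * (δ * (1 + ε / 2) + ε / 2) →
      |(N * (coeff M N x (M + 1) * coeff M N x' (M + 1) * S) +
          ∑ i : Fin M, coeff M N x ((i : ℕ) + 1) * coeff M N x' ((i : ℕ) + 1) * (x i * x' i)) /
          (N + M) - Q| ≤ ε := by
  set η : ℝ := ε / (4 * (5 + 3 * ε))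
  have hη : 0 < η := by positivity
  have hsmall : (4 + 7 * ε / 2) * δ + (5 + 3 * ε) * η ≤ ε / 2 := by
    have : (5 + 3 * ε) * η = ε / 4 := by simp only [η]; field_simp
    nlinarith
  have hlarge : ∀ (C : ℝ) {θ : ℝ}, 0 < θ → ∀ᶠ N : ℕ in atTop, C / N ≤ θ := fun C _ hθ =>
    (tendsto_const_div_atTop_nhds_zero_nat C).eventually (ge_mem_nhds hθ)
  filter_upwards [eventually_gt_atTop 0, hlarge ((M : ℝ) * (2 * M + 1)) one_half_pos,
    hlarge (6 * M * (M * (2 * M + 1))) hη, hlarge (M * (2 * M + 1) * (4 * M + 3)) hη]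
    with N hN ht hβ hα
  intro S Q x x' hQ hS hx hx' hxx'
  have hsq := sum_sq_le_two_mul_of_abs_sub_le hδ₁ hx
  have hsq' := sum_sq_le_two_mul_of_abs_sub_le hδ₁ hx'
  have hy : ∀ i, |x i * x' i| ≤ 2 * M := fun i => by
    have h := sq_le_of_sum_sq_le hsq i
    have h' := sq_le_of_sum_sq_le hsq' i
    rw [abs_le]; constructor <;> nlinarith [sq_nonneg (x i + x' i), sq_nonneg (x i - x' i)]
  refine abs_weighted_entry_sub_le hN hQ hS ?_ (fun i => ?_) hy hxx' hsmall
  · grw [natCast_mul_abs_coeff_last_mul_sub_one_le hδ₁ hN hx hx' ht, mul_div_assoc, hα]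
    linarith
  · grw [abs_coeff_mul_coeff_sub_one_le hN hsq hsq' ht, ← hβ]
    apply le_of_eq; ring

theorem stmt12_general (n M : ℕ)
    (Q : Matrix (Fin n) (Fin n) ℝ)
    (hQoff : ∀ j j', |Q j j'| ≤ 1) :
    ∀ ε : ℝ, 0 < ε → ∃ δ : ℝ, 0 < δ ∧ δ < ε ∧ ∃ N₀ : ℕ, ∀ N : ℕ, N₀ ≤ N →
      ∀ σ : Fin n → Fin N → ℝ,
        (∀ j, ∑ i, σ j i ^ 2 = (N : ℝ)) → supNorm (overlap σ σ - Q) ≤ ε →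
      ∀ ω : Fin n → Fin M → ℝ,
        (∃ s : Fin n → ℝ, ∃ τ : Fin n → Fin M → ℝ,
          (∀ j, Real.sqrt (1 - δ) ≤ s j ∧ s j ≤ Real.sqrt (1 + δ)) ∧
          (∀ j, ∑ i, τ j i ^ 2 = (M : ℝ)) ∧
          supNorm (overlap τ τ - Q) ≤ ε / 2 ∧
          (∀ j, ω j = s j • τ j)) →
        supNorm
          (overlap
            (fun j => Fin.append
              (fun i : Fin N => coeff M N (ω j) (M + 1) * σ j i)
              (fun i : Fin M => coeff M N (ω j) ((i : ℕ) + 1) * ω j i))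
            (fun j => Fin.append
              (fun i : Fin N => coeff M N (ω j) (M + 1) * σ j i)
              (fun i : Fin M => coeff M N (ω j) ((i : ℕ) + 1) * ω j i)) - Q) ≤ ε := by
  intro ε hε
  set δ := ε / (16 * (1 + ε))
  have hδ₀ : 0 ≤ δ := by positivity
  have hδε : 16 * (1 + ε) * δ = ε := by simp only [δ]; field_simp
  have hδ₁ : δ ≤ 1 := by nlinarith
  obtain ⟨N₀, hN₀⟩ := eventually_atTop.1 <|
    eventually_abs_coeff_entry_sub_le M hε hδ₀ hδ₁ hδε.le
  refine ⟨δ, by positivity, by nlinarith, N₀, fun N hN σ _ hσ ω ⟨s, τ, hs, hτ, hτQ, hωsτ⟩ => ?_⟩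
  have hss : ∀ j j', |s j * s j' - 1| ≤ δ := fun j j' =>
    abs_mul_sub_one_le_of_mem_sqrt hδ₀ hδ₁ (hs j) (hs j')
  change supNorm (overlap (transformedConcat σ ω) (transformedConcat σ ω) - Q) ≤ ε
  refine supNorm_le hε.le fun j j' => ?_
  rw [Matrix.sub_apply, overlap_transformedConcat_apply]
  exact hN₀ N hN _ _ _ _ (hQoff j j') ((abs_le_supNorm _ j j').trans hσ)
    (abs_sum_sq_sub_le_of_eq_smul (hωsτ j) (hss j j) (hτ j))
    (abs_sum_sq_sub_le_of_eq_smul (hωsτ j') (hss j' j') (hτ j'))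
    (abs_sum_mul_sub_le_of_eq_smul hωsτ (hss j j') (hQoff j j') ((abs_le_supNorm _ j j').trans hτQ))

/-- Lemma `split_cavity`.  Fix `n, M ≥ 1` and a constraint matrix
`Q`.  For every `ε > 0` there exist `δ ∈ (0, ε)` and `N₀` such that for all
`N ≥ N₀`: if `σ ∈ Q_N^ε` and `ω ∈ Ω_M^{ε/2, δ}`, then the transformed concatenated
configuration `ρ̃ = (σ̃, ω̃)` with `σ̃(j) = a_{M+1}(ω(j)) σ(j)` and
`ω̃_i(j) = a_i(ω(j)) ω_i(j)` satisfies `‖R(ρ̃, ρ̃) - Q‖_∞ ≤ ε`. -/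
theorem stmt12 (n M : ℕ) (hn : 1 ≤ n) (hM : 1 ≤ M)
    (Q : Matrix (Fin n) (Fin n) ℝ) (hQ : Q.PosSemidef)
    (hQdiag : ∀ j, Q j j = 1) (hQoff : ∀ j j', |Q j j'| ≤ 1) :
    ∀ ε : ℝ, 0 < ε → ∃ δ : ℝ, 0 < δ ∧ δ < ε ∧ ∃ N₀ : ℕ, ∀ N : ℕ, N₀ ≤ N →
      ∀ σ : Fin n → Fin N → ℝ,
        (∀ j, ∑ i, σ j i ^ 2 = (N : ℝ)) → supNorm (overlap σ σ - Q) ≤ ε →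
      ∀ ω : Fin n → Fin M → ℝ,
        (∃ s : Fin n → ℝ, ∃ τ : Fin n → Fin M → ℝ,
          (∀ j, Real.sqrt (1 - δ) ≤ s j ∧ s j ≤ Real.sqrt (1 + δ)) ∧
          (∀ j, ∑ i, τ j i ^ 2 = (M : ℝ)) ∧
          supNorm (overlap τ τ - Q) ≤ ε / 2 ∧
          (∀ j, ω j = s j • τ j)) →
        supNorm
          (overlap
            (fun j => Fin.append
              (fun i : Fin N => coeff M N (ω j) (M + 1) * σ j i)
              (fun i : Fin M => coeff M N (ω j) ((i : ℕ) + 1) * ω j i))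
            (fun j => Fin.append
              (fun i : Fin N => coeff M N (ω j) (M + 1) * σ j i)
              (fun i : Fin M => coeff M N (ω j) ((i : ℕ) + 1) * ω j i)) - Q) ≤ ε :=
  stmt12_general n M Q hQoff
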